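/- Let θ ∈ (0, π/2) and let O, A, B ∈ ℝ³ be affinely independent with ∠(O A B) ≥ θ, and let D ∈ ℝ³ not lie in the plane Π spanned by O, A, B, with the distance from D to Π at least sin θ · dist(O, D). If moreover φ := ∠(D A B) < θ, then θ ≤ 2·(1 + 1/sin θ)·sin φ. -/
import Mathlib

section AuxiliaryLemmas

open Real InnerProductGeometry
open scoped RealInnerProductSpace

variable {V : Type*} [NormedAddCommGroup V] [InnerProductSpace ℝ V]

theorem aux_le_of_sq_le_sq {a b : ℝ} (ha : 0 ≤ a) (hb : 0 ≤ b) (h : a ^ 2 ≤ b ^ 2) :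
    a ≤ b := by nlinarith

theorem aux_eq_of_sq_eq_sq {a b : ℝ} (ha : 0 ≤ a) (hb : 0 ≤ b) (h : a ^ 2 = b ^ 2) :
    a = b := le_antisymm (aux_le_of_sq_le_sq ha hb h.le) (aux_le_of_sq_le_sq hb ha h.ge)

theorem proj_orth (u v : V) (hu : u ≠ 0) :
    ⟪v - (⟪u, v⟫ / ⟪u, u⟫) • u, u⟫ = 0 := by
  have hun : (0:ℝ) < ‖u‖ := norm_pos_iff.2 hu
  have huu : (0:ℝ) < ⟪u, u⟫ := by rw [real_inner_self_eq_norm_sq]; positivity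
  rw [inner_sub_left, real_inner_smul_left]
  field_simp
  linarith [real_inner_comm v u]

theorem proj_norm (u v : V) (hu : u ≠ 0) :
    ‖v - (⟪u, v⟫ / ⟪u, u⟫) • u‖ = Real.sin (angle u v) * ‖v‖ := by
  have hun : (0:ℝ) < ‖u‖ := norm_pos_iff.2 hu
  set t : ℝ := ⟪u, v⟫ / ⟪u, u⟫ with ht
  have hn : ‖t • u‖ ^ 2 = t ^ 2 * ‖u‖ ^ 2 := by
    rw [norm_smul, mul_pow, Real.norm_eq_abs, sq_abs]
  have hrhs := sin_angle_mul_norm_mul_norm u v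
  have hnn : 0 ≤ ⟪u, u⟫ * ⟪v, v⟫ - ⟪u, v⟫ * ⟪u, v⟫ :=
    sub_nonneg.2 (real_inner_mul_inner_self_le u v)
  have hs0 : 0 ≤ Real.sin (angle u v) :=
    Real.sin_nonneg_of_nonneg_of_le_pi (angle_nonneg u v) (angle_le_pi u v)
  have hvu : ⟪v, u⟫ = ⟪u, v⟫ := real_inner_comm u v
  have key : (‖v - t • u‖ * ‖u‖) ^ 2 = (Real.sin (angle u v) * (‖u‖ * ‖v‖)) ^ 2 := by
    rw [hrhs, Real.sq_sqrt hnn, mul_pow, norm_sub_sq_real, real_inner_smul_right, hn, hvu, ht,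
      real_inner_self_eq_norm_sq u, real_inner_self_eq_norm_sq v]
    field_simp
    ring
  have heq := aux_eq_of_sq_eq_sq (by positivity) (by positivity) key
  have h2 : ‖v - t • u‖ * ‖u‖ = Real.sin (angle u v) * ‖v‖ * ‖u‖ := by rw [heq]; ring
  exact mul_right_cancel₀ hun.ne' h2

theorem proj_min (u v : V) (hu : u ≠ 0) (s : ℝ) :
    ‖v - (⟪u, v⟫ / ⟪u, u⟫) • u‖ ≤ ‖v - s • u‖ := by
  set t : ℝ := ⟪u, v⟫ / ⟪u, u⟫ with ht
  have hdecomp : v - s • u = (v - t • u) + (t - s) • u := by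
    rw [sub_smul]; abel
  have horth : ⟪v - t • u, (t - s) • u⟫ = 0 := by
    rw [real_inner_smul_right, ht, proj_orth u v hu, mul_zero]
  have hsq : ‖v - s • u‖ ^ 2 = ‖v - t • u‖ ^ 2 + ‖(t - s) • u‖ ^ 2 := by
    rw [hdecomp, norm_add_sq_real, horth]; ring
  exact aux_le_of_sq_le_sq (norm_nonneg _) (norm_nonneg _)
    (by nlinarith [sq_nonneg ‖(t - s) • u‖])

theorem angle_triangle_unit {x y z : V} (hx : ‖x‖ = 1) (hy : ‖y‖ = 1) (hz : ‖z‖ = 1) :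
    angle x z ≤ angle x y + angle y z := by
  by_cases hab : π ≤ angle x y + angle y z
  · exact (angle_le_pi x z).trans hab
  push_neg at hab
  have hy0 : y ≠ 0 := fun h => by simp [h] at hy
  have hcxy : Real.cos (angle x y) = ⟪x, y⟫ := by rw [cos_angle, hx, hy]; simp
  have hcyz : Real.cos (angle y z) = ⟪y, z⟫ := by rw [cos_angle, hy, hz]; simp
  have hcxz : Real.cos (angle x z) = ⟪x, z⟫ := by rw [cos_angle, hx, hz]; simp
  have hyy : ⟪y, y⟫ = 1 := by rw [real_inner_self_eq_norm_sq, hy]; norm_num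
  have hxy : ⟪y, x⟫ = ⟪x, y⟫ := real_inner_comm x y
  have hsxy : Real.sin (angle x y) = ‖x - ⟪x, y⟫ • y‖ := by
    have h := proj_norm y x hy0
    rw [hyy, div_one, hx, mul_one, angle_comm y x, hxy] at h
    exact h.symm
  have hsyz : Real.sin (angle y z) = ‖z - ⟪y, z⟫ • y‖ := by
    have h := proj_norm y z hy0
    rw [hyy, div_one, hz, mul_one] at h
    exact h.symm
  have hinner : ⟪x - ⟪x, y⟫ • y, z - ⟪y, z⟫ • y⟫ = ⟪x, z⟫ - ⟪x, y⟫ * ⟪y, z⟫ := by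
    simp only [inner_sub_left, inner_sub_right, real_inner_smul_left, real_inner_smul_right, hyy]
    ring
  have hcs : -(‖x - ⟪x, y⟫ • y‖ * ‖z - ⟪y, z⟫ • y‖) ≤ ⟪x, z⟫ - ⟪x, y⟫ * ⟪y, z⟫ := by
    rw [← hinner]
    have h1 := abs_real_inner_le_norm (x - ⟪x, y⟫ • y) (z - ⟪y, z⟫ • y)
    have h2 := neg_abs_le ⟪x - ⟪x, y⟫ • y, z - ⟪y, z⟫ • y⟫
    linarith
  have hcos : Real.cos (angle x y + angle y z) ≤ Real.cos (angle x z) := by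
    rw [Real.cos_add, hcxy, hcyz, hcxz, hsxy, hsyz]
    linarith
  by_contra hlt
  push_neg at hlt
  have := Real.strictAntiOn_cos
    ⟨add_nonneg (angle_nonneg x y) (angle_nonneg y z), hab.le⟩
    ⟨angle_nonneg x z, angle_le_pi x z⟩ hlt
  linarith

theorem angle_triangle' (x y z : V) (hx : x ≠ 0) (hy : y ≠ 0) (hz : z ≠ 0) :
    angle x z ≤ angle x y + angle y z := by
  have hx1 : ‖‖x‖⁻¹ • x‖ = 1 := norm_smul_inv_norm hx
  have hy1 : ‖‖y‖⁻¹ • y‖ = 1 := norm_smul_inv_norm hy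
  have hz1 : ‖‖z‖⁻¹ • z‖ = 1 := norm_smul_inv_norm hz
  have h := angle_triangle_unit hx1 hy1 hz1
  have hxp : (0:ℝ) < ‖x‖⁻¹ := inv_pos.2 (norm_pos_iff.2 hx)
  have hyp : (0:ℝ) < ‖y‖⁻¹ := inv_pos.2 (norm_pos_iff.2 hy)
  have hzp : (0:ℝ) < ‖z‖⁻¹ := inv_pos.2 (norm_pos_iff.2 hz)
  rwa [angle_smul_left_of_pos _ _ hxp, angle_smul_left_of_pos _ _ hxp,
    angle_smul_right_of_pos _ _ hzp, angle_smul_right_of_pos _ _ hyp,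
    angle_smul_left_of_pos _ _ hyp, angle_smul_right_of_pos _ _ hzp] at h


theorem le_two_sin {x : ℝ} (h0 : 0 ≤ x) (h2 : x ≤ π / 2) : x ≤ 2 * Real.sin x := by
  have h := Real.mul_le_sin h0 h2
  have hπ : π ≤ 4 := Real.pi_le_four
  have hπ0 : 0 < π := Real.pi_pos
  have hs : 0 ≤ Real.sin x := Real.sin_nonneg_of_nonneg_of_le_pi h0 (by linarith)
  have h' : 2 * x ≤ π * Real.sin x := by
    rw [div_mul_eq_mul_div, div_le_iff₀ hπ0] at h
    linarith
  nlinarith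


end AuxiliaryLemmas

open Real EuclideanGeometry
open scoped RealInnerProductSpace

set_option maxHeartbeats 1000000 in
theorem min_angle_key_inequality (θ : ℝ) (hθ : θ ∈ Set.Ioo 0 (π / 2))
    (O A B D : EuclideanSpace ℝ (Fin 3))
    (hOAB : AffineIndependent ℝ ![O, A, B])
    (hangle : θ ≤ ∠ O A B)
    (hD : D ∉ affineSpan ℝ ({O, A, B} : Set (EuclideanSpace ℝ (Fin 3))))
    (hdist : Real.sin θ * dist O D ≤
      Metric.infDist D (affineSpan ℝ ({O, A, B} : Set (EuclideanSpace ℝ (Fin 3))) :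
        Set (EuclideanSpace ℝ (Fin 3))))
    (hφ : ∠ D A B < θ) :
    θ ≤ 2 * (1 + 1 / Real.sin θ) * Real.sin (∠ D A B) := by
  obtain ⟨hθ0, hθ2⟩ := hθ
  have hπ0 : 0 < π := Real.pi_pos
  have hsθ : 0 < Real.sin θ := Real.sin_pos_of_pos_of_lt_pi hθ0 (by linarith)
  have hsθ1 : Real.sin θ ≤ 1 := Real.sin_le_one θ
  set S := affineSpan ℝ ({O, A, B} : Set (EuclideanSpace ℝ (Fin 3))) with hS
  have hO : O ∈ S := subset_affineSpan ℝ _ (by simp)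
  have hA : A ∈ S := subset_affineSpan ℝ _ (by simp)
  have hB : B ∈ S := subset_affineSpan ℝ _ (by simp)
  have hDA : D ≠ A := fun h => hD (h ▸ hA)
  have hDO : D ≠ O := fun h => hD (h ▸ hO)
  have hOA : O ≠ A := by
    have := hOAB.injective.ne (show (0 : Fin 3) ≠ 1 by decide)
    simpa using this
  have hBA : B ≠ A := by
    have := hOAB.injective.ne (show (2 : Fin 3) ≠ 1 by decide)
    simpa using this
  set u : EuclideanSpace ℝ (Fin 3) := B -ᵥ A with hu_def
  set v : EuclideanSpace ℝ (Fin 3) := D -ᵥ A with hv_def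
  set w : EuclideanSpace ℝ (Fin 3) := O -ᵥ A with hw_def
  have hu : u ≠ 0 := vsub_ne_zero.2 hBA
  have hv : v ≠ 0 := vsub_ne_zero.2 hDA
  have hw : w ≠ 0 := vsub_ne_zero.2 hOA
  have hvnorm : ‖v‖ = dist D A := (dist_eq_norm_vsub (EuclideanSpace ℝ (Fin 3)) D A).symm
  have hvpos : 0 < ‖v‖ := norm_pos_iff.2 hv
  have hODpos : 0 < dist O D := dist_pos.2 (Ne.symm hDO)
  have hφ_eq : ∠ D A B = InnerProductGeometry.angle v u := rfl
  have hOAB_eq : ∠ O A B = InnerProductGeometry.angle w u := rfl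
  have hOAD_eq : ∠ O A D = InnerProductGeometry.angle w v := rfl
  have hφ0 : 0 ≤ ∠ D A B := EuclideanGeometry.angle_nonneg D A B
  have hsφ0 : 0 ≤ Real.sin (∠ D A B) :=
    Real.sin_nonneg_of_nonneg_of_le_pi hφ0 (EuclideanGeometry.angle_le_pi D A B)
  -- Fact 1 : infDist D S ≤ sin φ * ‖v‖
  have fact1 : Metric.infDist D (S : Set (EuclideanSpace ℝ (Fin 3))) ≤
      Real.sin (∠ D A B) * ‖v‖ := by
    set t : ℝ := ⟪u, v⟫ / ⟪u, u⟫ with ht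
    have hP : AffineMap.lineMap A B t ∈ S := AffineMap.lineMap_mem t hA hB
    have hle := Metric.infDist_le_dist_of_mem (x := D) hP
    have hdd : dist D (AffineMap.lineMap A B t) = Real.sin (∠ D A B) * ‖v‖ := by
      rw [dist_eq_norm_vsub (EuclideanSpace ℝ (Fin 3)),
        show D -ᵥ AffineMap.lineMap A B t = v - t • u by
          rw [AffineMap.lineMap_apply, vsub_vadd_eq_vsub_sub],
        ht, proj_norm u v hu, hφ_eq, InnerProductGeometry.angle_comm]
    linarith [hle, hdd.le, hdd.ge]
  -- Fact 2 : sin(∠ O A D) * ‖v‖ ≤ dist O D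
  have fact2 : Real.sin (∠ O A D) * ‖v‖ ≤ dist O D := by
    rw [hOAD_eq, ← proj_norm w v hw]
    calc ‖v - (⟪w, v⟫ / ⟪w, w⟫) • w‖ ≤ ‖v - (1 : ℝ) • w‖ := proj_min w v hw 1
      _ = dist O D := by
          rw [one_smul, show v - w = D -ᵥ O from vsub_sub_vsub_cancel_right D O A,
            dist_comm, dist_eq_norm_vsub (EuclideanSpace ℝ (Fin 3))]
  have key1 : Real.sin θ * dist O D ≤ Real.sin (∠ D A B) * ‖v‖ := hdist.trans fact1
  have hsφlt : Real.sin (∠ D A B) < Real.sin θ :=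
    Real.sin_lt_sin_of_lt_of_le_pi_div_two (by linarith) (le_of_lt hθ2) hφ
  -- the angle ∠ O A D is acute
  have hcos : 0 ≤ Real.cos (∠ O A D) := by
    by_contra hneg
    push_neg at hneg
    have hlaw := EuclideanGeometry.law_cos O A D
    have hOAnn : 0 ≤ dist O A := dist_nonneg
    have hDAnn : 0 ≤ dist D A := dist_nonneg
    have h0 : 0 ≤ dist O A * dist D A * (-Real.cos (∠ O A D)) :=
      mul_nonneg (mul_nonneg hOAnn hDAnn) (by linarith)
    have hADle : dist D A ≤ dist O D := by
      apply aux_le_of_sq_le_sq hDAnn (le_of_lt hODpos)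
      nlinarith [hlaw, h0, sq_nonneg (dist O A)]
    have h5 : Real.sin (∠ D A B) * dist D A ≤ Real.sin (∠ D A B) * dist O D :=
      mul_le_mul_of_nonneg_left hADle hsφ0
    rw [← hvnorm] at h5
    have h6 : Real.sin θ * dist O D ≤ Real.sin (∠ D A B) * dist O D := le_trans key1 h5
    have h7 : Real.sin θ ≤ Real.sin (∠ D A B) := le_of_mul_le_mul_right h6 hODpos
    linarith
  have hOAD2 : ∠ O A D ≤ π / 2 := by
    by_contra hgt
    push_neg at hgt
    have := Real.cos_neg_of_pi_div_two_lt_of_lt hgt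
      (by linarith [EuclideanGeometry.angle_le_pi O A D])
    linarith
  have hOAD0 : 0 ≤ ∠ O A D := EuclideanGeometry.angle_nonneg O A D
  have hsOAD0 : 0 ≤ Real.sin (∠ O A D) :=
    Real.sin_nonneg_of_nonneg_of_le_pi hOAD0 (by linarith)
  -- sin θ * sin(∠ O A D) ≤ sin φ
  have h3 : Real.sin θ * Real.sin (∠ O A D) ≤ Real.sin (∠ D A B) := by
    have h4 : Real.sin θ * (Real.sin (∠ O A D) * ‖v‖) ≤ Real.sin (∠ D A B) * ‖v‖ :=
      (mul_le_mul_of_nonneg_left fact2 hsθ.le).trans key1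
    have h5 : Real.sin θ * Real.sin (∠ O A D) * ‖v‖ ≤ Real.sin (∠ D A B) * ‖v‖ := by
      rw [mul_assoc]; exact h4
    exact le_of_mul_le_mul_right h5 hvpos
  -- angle triangle inequality
  have htri : ∠ O A B ≤ ∠ O A D + ∠ D A B := by
    rw [hOAB_eq, hOAD_eq, hφ_eq]
    exact angle_triangle' w v u hw hv hu
  have hOADle : ∠ O A D ≤ 2 * Real.sin (∠ O A D) := le_two_sin hOAD0 hOAD2
  have hφle : ∠ D A B ≤ 2 * Real.sin (∠ D A B) := le_two_sin hφ0 (by linarith)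
  have hexpand : 2 * (1 + 1 / Real.sin θ) * Real.sin (∠ D A B) =
      2 * (Real.sin θ + 1) * Real.sin (∠ D A B) / Real.sin θ := by
    field_simp
  rw [hexpand, le_div_iff₀ hsθ]
  nlinarith [mul_le_mul_of_nonneg_right (hangle.trans htri) hsθ.le,
    mul_le_mul_of_nonneg_right hOADle hsθ.le,
    mul_le_mul_of_nonneg_right hφle hsθ.le, h3, hsφ0, hsθ, hsθ1]
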